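/- arXiv:1708.01551 — 3 statements merged into one kernel-verified Lean document; each statement's English description precedes it below -/
import Mathlib

section
/- Let ħ > 0 and let M = X + iY be a complex symmetric n×n matrix with X positive definite and Y real symmetric. Then for every z ∈ ℝ^{2n} the Wigner transform satisfies Wφ_M^ħ(z) = (πħ)^{-n} e^{-(1/ħ) zᵀGz}, where G = SᵀS with S the real 2n×2n block matrix S = [[X^{1/2}, 0], [X^{-1/2}Y, X^{-1/2}]] (X^{1/2} being the positive definite square root of X); moreover S is symplectic, i.e. SᵀJS = J. -/
/-!
Write `X = Re M`, `Y = Im M` and `z = (x, p)`. By the parallelogram law for `X` and polarization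
for the symmetric `Y`, the Wigner integrand is a Gaussian in `y`,
`c² e^{-xᵀXx/ħ} exp(-yᵀXy/(4ħ) - (i/ħ)(Yx + p)·y)` with `c` the normalisation of `φ_M`. The substitution `y = X^{-1/2} u` turns it
into a product of one-dimensional Gaussian Fourier integrals, and the result is
`(πħ)^{-n} exp(-(|X^{1/2}x|² + |X^{-1/2}(Yx + p)|²)/ħ)`, whose exponent is `-|Sz|²/ħ`.
That `S` is symplectic only uses `(X^{1/2})ᵀ X^{-1/2} = 1` and `Yᵀ = Y`.
-/

open MeasureTheory Complex Real
open scoped BigOperators Matrix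

noncomputable section

/-- Phase space points `z = (x,p)`. -/
abbrev PS (n : ℕ) := (Fin n → ℝ) × (Fin n → ℝ)

/-- Euclidean dot product. -/
def dotR {m : Type*} [Fintype m] (x y : m → ℝ) : ℝ := ∑ i, x i * y i

/-- The standard symplectic form `σ(z,z') = p·x' − p'·x`. -/
def symp {n : ℕ} (z z' : PS n) : ℝ := dotR z.2 z'.1 - dotR z'.2 z.1

/-- The Heisenberg operator `T̂(z₀)`. -/
def heis {n : ℕ} (hb : ℝ) (z₀ : PS n) (φ : (Fin n → ℝ) → ℂ) : (Fin n → ℝ) → ℂ :=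
  fun x => Complex.exp ((Complex.I / (hb : ℂ)) *
      ((dotR z₀.2 x - dotR z₀.2 z₀.1 / 2 : ℝ) : ℂ)) * φ (x - z₀.1)

/-- The phase space translation operator `T̃(z₀)`. -/
def psT {n : ℕ} (hb : ℝ) (z₀ : PS n) (Ψ : PS n → ℂ) : PS n → ℂ :=
  fun z => Complex.exp (-(Complex.I / (hb : ℂ)) * ((symp z z₀ : ℝ) : ℂ)) *
    Ψ (z - (2 : ℝ)⁻¹ • z₀)

/-- The `L²(ℝⁿ)` inner product `⟨ψ,φ⟩ = ∫ ψ conj φ`. -/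
def L2inner {n : ℕ} (ψ φ : (Fin n → ℝ) → ℂ) : ℂ :=
  ∫ x : Fin n → ℝ, ψ x * (starRingEnd ℂ) (φ x)

/-- The squared `L²(ℝⁿ)` norm. -/
def normSq2 {n : ℕ} (ψ : (Fin n → ℝ) → ℂ) : ℝ := ∫ x : Fin n → ℝ, ‖ψ x‖ ^ 2

/-- The `L²(ℝ²ⁿ)` (phase space) inner product. -/
def PSinner {n : ℕ} (Ψ Φ : PS n → ℂ) : ℂ :=
  ∫ z : PS n, Ψ z * (starRingEnd ℂ) (Φ z)

/-- The Weyl–Heisenberg system `G(φ,Λ)` is a frame with bounds `a`, `b`. -/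
def IsWHFrame {n : ℕ} (hb : ℝ) (φ : (Fin n → ℝ) → ℂ) (Λ : Set (PS n)) (a b : ℝ) : Prop :=
  ∀ ψ : (Fin n → ℝ) → ℂ, MemLp ψ 2 volume →
    a * normSq2 ψ ≤ ∑' zl : Λ, ‖L2inner ψ (heis hb (zl : PS n) φ)‖ ^ 2 ∧
    ∑' zl : Λ, ‖L2inner ψ (heis hb (zl : PS n) φ)‖ ^ 2 ≤ b * normSq2 ψ

/-- The cross-Wigner transform. -/
def crossWigner {n : ℕ} (hb : ℝ) (ψ φ : (Fin n → ℝ) → ℂ) : PS n → ℂ :=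
  fun z => (((2 * π * hb) ^ n : ℝ) : ℂ)⁻¹ *
    ∫ y : Fin n → ℝ, Complex.exp (-(Complex.I / (hb : ℂ)) * ((dotR z.2 y : ℝ) : ℂ)) *
      ψ (z.1 + (2 : ℝ)⁻¹ • y) * (starRingEnd ℂ) (φ (z.1 - (2 : ℝ)⁻¹ • y))

/-- The cross-ambiguity function. -/
def crossAmb {n : ℕ} (hb : ℝ) (ψ φ : (Fin n → ℝ) → ℂ) : PS n → ℂ :=
  fun z => (((2 * π * hb) ^ n : ℝ) : ℂ)⁻¹ *
    ∫ y : Fin n → ℝ, Complex.exp (-(Complex.I / (hb : ℂ)) * ((dotR z.2 y : ℝ) : ℂ)) *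
      ψ (y + (2 : ℝ)⁻¹ • z.1) * (starRingEnd ℂ) (φ (y - (2 : ℝ)⁻¹ • z.1))

/-- A phase space point as a `2n`-vector. -/
def vec {n : ℕ} (z : PS n) : (Fin n ⊕ Fin n) → ℝ := Sum.elim z.1 z.2

/-- A `2n`-vector as a phase space point. -/
def unvec {n : ℕ} (v : (Fin n ⊕ Fin n) → ℝ) : PS n := (v ∘ Sum.inl, v ∘ Sum.inr)

/-- Complex quadratic form `zᵀ F z` of a real vector. -/
def qfC {m : Type*} [Fintype m] (F : Matrix m m ℂ) (z : m → ℝ) : ℂ :=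
  ∑ i, ∑ j, (z i : ℂ) * F i j * (z j : ℂ)

/-- Real quadratic form `zᵀ G z`. -/
def qfR {m : Type*} [Fintype m] (G : Matrix m m ℝ) (z : m → ℝ) : ℝ :=
  ∑ i, ∑ j, z i * G i j * z j

/-- The generalized Gaussian `φ_M^hb`. -/
def gaussM {n : ℕ} (hb : ℝ) (M : Matrix (Fin n) (Fin n) ℂ) : (Fin n → ℝ) → ℂ :=
  fun x => (((π * hb) ^ (-(n : ℝ) / 4) * (M.map Complex.re).det ^ ((1 : ℝ) / 4) : ℝ) : ℂ) *
    Complex.exp (-(1 / (2 * (hb : ℂ))) * qfC M x)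

/-- The standard Gaussian `φ^hb`. -/
def stdGauss {n : ℕ} (hb : ℝ) : (Fin n → ℝ) → ℂ :=
  fun x => (((π * hb) ^ (-(n : ℝ) / 4) : ℝ) : ℂ) *
    Complex.exp (((-(dotR x x) / (2 * hb) : ℝ)) : ℂ)

/-- The standard symplectic matrix `J` (real version). -/
def JmatR (n : ℕ) : Matrix (Fin n ⊕ Fin n) (Fin n ⊕ Fin n) ℝ :=
  Matrix.fromBlocks 0 1 (-1) 0

/-- The standard symplectic matrix `J` (complex version). -/
def JmatC (n : ℕ) : Matrix (Fin n ⊕ Fin n) (Fin n ⊕ Fin n) ℂ :=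
  Matrix.fromBlocks 0 1 (-1) 0

/-- The square root of a positive semidefinite matrix, as `Matrix.PosSemidef.sqrt` was
defined in Mathlib (Dec 2024). -/
def psdSqrtOld {m : Type*} [Fintype m] [DecidableEq m] {A : Matrix m m ℝ}
    (hA : A.PosSemidef) : Matrix m m ℝ :=
  (hA.1.eigenvectorUnitary : Matrix m m ℝ) *
    Matrix.diagonal ((↑) ∘ (√·) ∘ hA.1.eigenvalues) *
    (star hA.1.eigenvectorUnitary : Matrix m m ℝ)

section

open Matrix ComplexConjugate

section QuadraticForm

variable {m : Type*} [Fintype m]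

lemma dotR_eq_dotProduct (x y : m → ℝ) : dotR x y = x ⬝ᵥ y := rfl

lemma qfR_eq_dotProduct_mulVec (G : Matrix m m ℝ) (v : m → ℝ) : qfR G v = v ⬝ᵥ G *ᵥ v := by
  simp [qfR, dotProduct, mulVec, Finset.mul_sum, mul_assoc]

lemma qfR_transpose_mul_self {k : Type*} [Fintype k] (B : Matrix k m ℝ) (v : m → ℝ) :
    qfR (Bᵀ * B) v = B *ᵥ v ⬝ᵥ B *ᵥ v := by
  rw [qfR_eq_dotProduct_mulVec, ← mulVec_mulVec, dotProduct_mulVec, vecMul_transpose]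

lemma qfR_smul (G : Matrix m m ℝ) (c : ℝ) (v : m → ℝ) : qfR G (c • v) = c ^ 2 * qfR G v := by
  simp only [qfR_eq_dotProduct_mulVec, mulVec_smul, dotProduct_smul, smul_dotProduct, smul_eq_mul]
  ring

lemma qfR_add_add_qfR_sub (G : Matrix m m ℝ) (x y : m → ℝ) :
    qfR G (x + y) + qfR G (x - y) = 2 * qfR G x + 2 * qfR G y := by
  simp only [qfR_eq_dotProduct_mulVec, mulVec_add, mulVec_sub, dotProduct_add, add_dotProduct,
    dotProduct_sub, sub_dotProduct]
  ring

lemma qfR_add_sub_qfR_sub {G : Matrix m m ℝ} (hG : G.IsSymm) (x y : m → ℝ) :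
    qfR G (x + y) - qfR G (x - y) = 4 * (G *ᵥ x ⬝ᵥ y) := by
  have hxy : x ⬝ᵥ G *ᵥ y = G *ᵥ x ⬝ᵥ y := by
    rw [dotProduct_mulVec, ← mulVec_transpose, hG.eq]
  have hyx : y ⬝ᵥ G *ᵥ x = G *ᵥ x ⬝ᵥ y := dotProduct_comm _ _
  simp only [qfR_eq_dotProduct_mulVec, mulVec_add, mulVec_sub, dotProduct_add, add_dotProduct,
    dotProduct_sub, sub_dotProduct, hxy, hyx]
  ring

lemma qfC_eq_qfR_re_add_I_mul_qfR_im (M : Matrix m m ℂ) (v : m → ℝ) :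
    qfC M v = qfR (M.map re) v + I * qfR (M.map im) v := by
  simp only [qfC, qfR, map_apply, ofReal_sum, ofReal_mul, Finset.mul_sum, ← Finset.sum_add_distrib]
  refine Finset.sum_congr rfl fun i _ => Finset.sum_congr rfl fun j _ => ?_
  conv_lhs => rw [← re_add_im (M i j)]
  ring

end QuadraticForm

section ChangeOfVariables

variable {ι E : Type*} [Fintype ι] [DecidableEq ι] [NormedAddCommGroup E] [NormedSpace ℝ E]

theorem integral_comp_mulVec {A : Matrix ι ι ℝ} (hA : A.det ≠ 0) (f : (ι → ℝ) → E) :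
    ∫ u, f (A *ᵥ u) = |A.det|⁻¹ • ∫ y, f y := by
  have hemb : MeasurableEmbedding (toLin' A) :=
    (LinearEquiv.ofIsUnitDet (v := Pi.basisFun ℝ ι) (v' := Pi.basisFun ℝ ι) (f := toLin' A)
      (by rwa [LinearMap.det_toMatrix, LinearMap.det_toLin', isUnit_iff_ne_zero])
      ).toContinuousLinearEquiv.toHomeomorph.measurableEmbedding
  change ∫ u, f (toLin' A u) = _
  rw [← hemb.integral_map, Real.map_matrix_volume_pi_eq_smul_volume_pi hA, integral_smul_measure,
    ENNReal.toReal_ofReal (abs_nonneg _), abs_inv]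

end ChangeOfVariables

section GaussianIntegral

variable {ι : Type*} [Fintype ι] [DecidableEq ι]

theorem integral_cexp_neg_qfR_sub_I_mul {B : Matrix ι ι ℝ} (hB : B.det ≠ 0) {a : ℝ} (ha : 0 < a)
    (b : ℝ) (w : ι → ℝ) :
    ∫ y : ι → ℝ, cexp (-(a : ℂ) * qfR (Bᵀ * B) y - I * b * (w ⬝ᵥ y : ℝ))
      = ((|B.det|⁻¹ * (π / a) ^ ((Fintype.card ι : ℝ) / 2) : ℝ) : ℂ) *
        cexp (-((b ^ 2 / (4 * a) * (w ᵥ* B⁻¹ ⬝ᵥ w ᵥ* B⁻¹) : ℝ) : ℂ)) := by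
  have hunit : IsUnit B.det := isUnit_iff_ne_zero.mpr hB
  have hdet_inv : B⁻¹.det = B.det⁻¹ := by rw [det_nonsing_inv, Ring.inverse_eq_inv']
  set v := w ᵥ* B⁻¹
  have hsubst : ∀ u : ι → ℝ,
      cexp (-(a : ℂ) * qfR (Bᵀ * B) (B⁻¹ *ᵥ u) - I * b * (w ⬝ᵥ B⁻¹ *ᵥ u : ℝ))
        = cexp (-(a : ℂ) * ∑ i, (u i : ℂ) ^ 2 + ∑ i, (-I * b * v i) * u i) := by
    intro u
    rw [qfR_transpose_mul_self, mulVec_mulVec, mul_nonsing_inv _ hunit, one_mulVec,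
      dotProduct_mulVec]
    congr 1
    simp only [dotProduct, ofReal_sum, ofReal_mul, Finset.mul_sum, sub_eq_add_neg,
      ← Finset.sum_neg_distrib, v]
    congr 1 <;> exact Finset.sum_congr rfl fun i _ => by ring
  have hgauss := GaussianFourier.integral_cexp_neg_mul_sum_add (b := (a : ℂ))
    (by rwa [ofReal_re]) (fun i => -I * b * v i)
  have hcv := integral_comp_mulVec (A := B⁻¹) (by rw [hdet_inv]; exact inv_ne_zero hB)
    (fun y => cexp (-(a : ℂ) * qfR (Bᵀ * B) y - I * b * (w ⬝ᵥ y : ℝ)))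
  simp only [hsubst, hgauss, hdet_inv, abs_inv, inv_inv] at hcv
  rw [← inv_smul_smul₀ (abs_ne_zero.mpr hB) (∫ y, _), ← hcv, Complex.real_smul,
    ofReal_mul, ofReal_cpow (by positivity), mul_assoc]
  congr 2
  · push_cast
    rfl
  · simp only [dotProduct, ofReal_mul, ofReal_div, ofReal_sum, Finset.sum_div,
      Finset.mul_sum, ← Finset.sum_neg_distrib]
    congr 1
    refine Finset.sum_congr rfl fun i _ => ?_
    push_cast
    linear_combination (b : ℂ) ^ 2 * (v i : ℂ) ^ 2 / (4 * a) * I_sq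

end GaussianIntegral

section PsdSqrt

variable {m : Type*} [Fintype m] [DecidableEq m] {A : Matrix m m ℝ}

lemma transpose_psdSqrtOld (hA : A.PosSemidef) : (psdSqrtOld hA)ᵀ = psdSqrtOld hA := by
  have h : (psdSqrtOld hA).IsHermitian := by
    simp [psdSqrtOld, IsHermitian, star_eq_conjTranspose, Matrix.mul_assoc]
  rwa [IsHermitian, conjTranspose_eq_transpose_of_trivial] at h

lemma psdSqrtOld_mul_self (hA : A.PosSemidef) : psdSqrtOld hA * psdSqrtOld hA = A := by
  set U : Matrix m m ℝ := (hA.1.eigenvectorUnitary : Matrix m m ℝ)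
  have hU : star U * U = 1 := Unitary.coe_star_mul_self hA.1.eigenvectorUnitary
  have hD : diagonal ((↑) ∘ (√·) ∘ hA.1.eigenvalues) * diagonal ((↑) ∘ (√·) ∘ hA.1.eigenvalues)
      = diagonal (RCLike.ofReal ∘ hA.1.eigenvalues : m → ℝ) := by
    rw [diagonal_mul_diagonal]
    congr 1
    funext i
    simp [Real.mul_self_sqrt (hA.eigenvalues_nonneg i)]
  conv_rhs => rw [hA.1.spectral_theorem, Unitary.conjStarAlgAut_apply, ← hD]
  simp only [psdSqrtOld, Matrix.mul_assoc]
  rw [← Matrix.mul_assoc (star U) U, hU, Matrix.one_mul]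

end PsdSqrt

lemma gaussM_wigner_constant (n : ℕ) {t d : ℝ} (ht : 0 < t) (hd : d ≠ 0) :
    ((2 * t) ^ n)⁻¹ * (t ^ (-(n : ℝ) / 4) * (d ^ 2) ^ ((1 : ℝ) / 4)) ^ 2 *
      (|d|⁻¹ * (4 * t) ^ ((n : ℝ) / 2)) = (t ^ n)⁻¹ := by
  have hd2 : ((d ^ 2) ^ ((1 : ℝ) / 4)) ^ 2 = |d| := by
    rw [← Real.rpow_mul_natCast (sq_nonneg d), ← Real.sqrt_sq_eq_abs, Real.sqrt_eq_rpow]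
    norm_num
  have ht2 : (t ^ (-(n : ℝ) / 4)) ^ 2 * (4 * t) ^ ((n : ℝ) / 2) = 2 ^ n := by
    rw [← Real.rpow_mul_natCast ht.le, Real.mul_rpow (by norm_num) ht.le, mul_left_comm,
      ← Real.rpow_add ht, show -(n : ℝ) / 4 * (2 : ℕ) + n / 2 = 0 by push_cast; ring,
      Real.rpow_zero, mul_one, show (4 : ℝ) = 2 ^ (2 : ℝ) by norm_num,
      ← Real.rpow_mul (by norm_num), show (2 : ℝ) * (n / 2) = n by ring, Real.rpow_natCast]
  calc ((2 * t) ^ n)⁻¹ * (t ^ (-(n : ℝ) / 4) * (d ^ 2) ^ ((1 : ℝ) / 4)) ^ 2 *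
        (|d|⁻¹ * (4 * t) ^ ((n : ℝ) / 2))
      = ((2 * t) ^ n)⁻¹ * ((t ^ (-(n : ℝ) / 4)) ^ 2 * (4 * t) ^ ((n : ℝ) / 2)) *
          (((d ^ 2) ^ ((1 : ℝ) / 4)) ^ 2 * |d|⁻¹) := by ring
    _ = (t ^ n)⁻¹ := by
      rw [ht2, hd2, mul_inv_cancel₀ (abs_ne_zero.mpr hd), mul_pow]
      field_simp

section Wigner

variable {n : ℕ}

lemma gaussM_mul_conj_gaussM (hb : ℝ) {M : Matrix (Fin n) (Fin n) ℂ} (hM : M.IsSymm)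
    (x y : Fin n → ℝ) :
    gaussM hb M (x + (2 : ℝ)⁻¹ • y) * conj (gaussM hb M (x - (2 : ℝ)⁻¹ • y)) =
      ((((π * hb) ^ (-(n : ℝ) / 4) * (M.map re).det ^ ((1 : ℝ) / 4)) ^ 2 : ℝ) : ℂ) *
        cexp (-(hb⁻¹ : ℝ) * qfR (M.map re) x) *
        cexp (-((4 * hb)⁻¹ : ℝ) * qfR (M.map re) y -
          I * (hb⁻¹ : ℝ) * (M.map im *ᵥ x ⬝ᵥ y : ℝ)) := by
  have hre := qfR_add_add_qfR_sub (M.map re) x ((2 : ℝ)⁻¹ • y)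
  have him := qfR_add_sub_qfR_sub (hM.map im) x ((2 : ℝ)⁻¹ • y)
  rw [qfR_smul] at hre
  rw [dotProduct_smul, smul_eq_mul] at him
  apply_fun ((↑) : ℝ → ℂ) at hre him
  push_cast at hre him
  simp only [gaussM, qfC_eq_qfR_re_add_I_mul_qfR_im, map_mul, conj_ofReal, ← Complex.exp_conj,
    map_neg, map_div₀, map_one, map_ofNat, map_add, conj_I]
  rw [mul_mul_mul_comm, ← Complex.exp_add, mul_assoc _ (cexp _), ← Complex.exp_add, ofReal_pow, sq]
  congr 2
  push_cast
  linear_combination (-(1 / (2 * (hb : ℂ)))) * hre + (-(I / (2 * (hb : ℂ)))) * him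

theorem crossWigner_gaussM {hb : ℝ} (hhb : 0 < hb) {M : Matrix (Fin n) (Fin n) ℂ} (hM : M.IsSymm)
    {B : Matrix (Fin n) (Fin n) ℝ} (hBX : Bᵀ * B = M.map re) (hB : B.det ≠ 0) (z : PS n) :
    crossWigner hb (gaussM hb M) (gaussM hb M) z =
      (((π * hb) ^ n : ℝ) : ℂ)⁻¹ * cexp (-(hb⁻¹ : ℝ) * ((B *ᵥ z.1 ⬝ᵥ B *ᵥ z.1 +
        (M.map im *ᵥ z.1 + z.2) ᵥ* B⁻¹ ⬝ᵥ (M.map im *ᵥ z.1 + z.2) ᵥ* B⁻¹ : ℝ) : ℂ)) := by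
  obtain ⟨x, p⟩ := z
  set w := M.map im *ᵥ x + p
  set c := (π * hb) ^ (-(n : ℝ) / 4) * (M.map re).det ^ ((1 : ℝ) / 4)
  have hintegrand : ∀ y : Fin n → ℝ,
      cexp (-(I / hb) * (dotR p y : ℝ)) * gaussM hb M (x + (2 : ℝ)⁻¹ • y) *
          conj (gaussM hb M (x - (2 : ℝ)⁻¹ • y))
        = ((c ^ 2 : ℝ) : ℂ) * cexp (-(hb⁻¹ : ℝ) * qfR (M.map re) x) *
          cexp (-((4 * hb)⁻¹ : ℝ) * qfR (Bᵀ * B) y - I * (hb⁻¹ : ℝ) * (w ⬝ᵥ y : ℝ)) := by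
    intro y
    have hphase : cexp (-(I / hb) * (dotR p y : ℝ)) *
        cexp (-((4 * hb)⁻¹ : ℝ) * qfR (M.map re) y - I * (hb⁻¹ : ℝ) * (M.map im *ᵥ x ⬝ᵥ y : ℝ))
          = cexp (-((4 * hb)⁻¹ : ℝ) * qfR (M.map re) y - I * (hb⁻¹ : ℝ) * (w ⬝ᵥ y : ℝ)) := by
      rw [← Complex.exp_add]
      congr 1
      simp only [w, add_dotProduct, dotR_eq_dotProduct, ofReal_add]
      push_cast
      ring
    rw [mul_assoc, gaussM_mul_conj_gaussM hb hM, hBX, ← hphase]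
    ring
  simp only [crossWigner, hintegrand, integral_const_mul]
  rw [integral_cexp_neg_qfR_sub_I_mul hB (by positivity), Fintype.card_fin,
    show π / (4 * hb)⁻¹ = 4 * (π * hb) by field_simp]
  have hdet : (M.map re).det = B.det ^ 2 := by rw [← hBX, det_mul, det_transpose, sq]
  have hconst : ((2 * (π * hb)) ^ n)⁻¹ * c ^ 2 * (|B.det|⁻¹ * (4 * (π * hb)) ^ ((n : ℝ) / 2))
      = ((π * hb) ^ n)⁻¹ := by
    simpa only [c, hdet] using gaussM_wigner_constant n (t := π * hb) (by positivity) hB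
  rw [← hBX, qfR_transpose_mul_self]
  calc _ = ((((2 * (π * hb)) ^ n)⁻¹ * c ^ 2 * (|B.det|⁻¹ * (4 * (π * hb)) ^ ((n : ℝ) / 2)) : ℝ)
          : ℂ) * cexp (-(hb⁻¹ : ℝ) * (B *ᵥ x ⬝ᵥ B *ᵥ x : ℝ) +
          -((hb⁻¹ ^ 2 / (4 * (4 * hb)⁻¹) * (w ᵥ* B⁻¹ ⬝ᵥ w ᵥ* B⁻¹) : ℝ) : ℂ)) := by
        rw [Complex.exp_add]; push_cast; ring
    _ = _ := by
        rw [hconst, show hb⁻¹ ^ 2 / (4 * (4 * hb)⁻¹) = hb⁻¹ by field_simp, ofReal_inv]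
        congr 2
        push_cast
        ring

end Wigner

section BlockMatrix

lemma qfR_transpose_mul_self_fromBlocks {m m' : Type*} [Fintype m] [Fintype m']
    (A : Matrix m m ℝ) (C : Matrix m' m' ℝ) (Y : Matrix m' m ℝ) (x : m → ℝ) (p : m' → ℝ) :
    qfR ((fromBlocks A 0 (C * Y) C)ᵀ * fromBlocks A 0 (C * Y) C) (Sum.elim x p)
      = A *ᵥ x ⬝ᵥ A *ᵥ x + C *ᵥ (Y *ᵥ x + p) ⬝ᵥ C *ᵥ (Y *ᵥ x + p) := by
  rw [qfR_transpose_mul_self, fromBlocks_mulVec]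
  simp [dotProduct, Fintype.sum_sum_type, mulVec_add, mulVec_mulVec]

lemma fromBlocks_transpose_mul_JmatR_mul {n : ℕ} {A C Y : Matrix (Fin n) (Fin n) ℝ}
    (hAC : Aᵀ * C = 1) (hY : Y.IsSymm) :
    (fromBlocks A 0 (C * Y) C)ᵀ * JmatR n * fromBlocks A 0 (C * Y) C = JmatR n := by
  have hCA : Cᵀ * A = 1 := by simpa using congrArg transpose hAC
  rw [JmatR, fromBlocks_transpose, fromBlocks_multiply, fromBlocks_multiply]
  have hYCA : Y * Cᵀ * A = Y := by rw [Matrix.mul_assoc, hCA, Matrix.mul_one]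
  simp [transpose_mul, hY.eq, ← Matrix.mul_assoc, hAC, hCA, hYCA]

end BlockMatrix

end

/-- the Wigner transform of a generalized Gaussian, and the symplectic
factorization `G = SᵀS` of its Gram matrix. -/
theorem stmt1 (hb : ℝ) (hhb : 0 < hb) (n : ℕ)
    (M : Matrix (Fin n) (Fin n) ℂ) (hMsymm : M.IsSymm)
    (hX : (M.map Complex.re).PosDef) :
    (∀ z : PS n,
      crossWigner hb (gaussM hb M) (gaussM hb M) z =
        ((((π * hb) ^ n : ℝ) : ℂ))⁻¹ *
          Complex.exp (((-(1 / hb) *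
            qfR ((Matrix.fromBlocks (psdSqrtOld hX.posSemidef) 0
                ((psdSqrtOld hX.posSemidef)⁻¹ * M.map Complex.im) (psdSqrtOld hX.posSemidef)⁻¹)ᵀ *
              (Matrix.fromBlocks (psdSqrtOld hX.posSemidef) 0
                ((psdSqrtOld hX.posSemidef)⁻¹ * M.map Complex.im) (psdSqrtOld hX.posSemidef)⁻¹))
            (vec z) : ℝ)) : ℂ)) ∧
    (Matrix.fromBlocks (psdSqrtOld hX.posSemidef) 0
        ((psdSqrtOld hX.posSemidef)⁻¹ * M.map Complex.im) (psdSqrtOld hX.posSemidef)⁻¹)ᵀ * JmatR n *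
      (Matrix.fromBlocks (psdSqrtOld hX.posSemidef) 0
        ((psdSqrtOld hX.posSemidef)⁻¹ * M.map Complex.im) (psdSqrtOld hX.posSemidef)⁻¹) = JmatR n := by
  set B := psdSqrtOld hX.posSemidef
  have hBsymm : Bᵀ = B := transpose_psdSqrtOld hX.posSemidef
  have hBX : Bᵀ * B = M.map re := by rw [hBsymm, psdSqrtOld_mul_self]
  have hB : B.det ≠ 0 := by
    have hdet := hX.det_pos
    rw [← hBX, Matrix.det_mul, Matrix.det_transpose] at hdet
    exact left_ne_zero_of_mul hdet.ne'
  refine ⟨fun z => ?_, fromBlocks_transpose_mul_JmatR_mul ?_ (hMsymm.map im)⟩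
  · rw [crossWigner_gaussM hhb hMsymm hBX hB, vec, qfR_transpose_mul_self_fromBlocks,
      ← Matrix.mulVec_transpose, Matrix.transpose_nonsing_inv, hBsymm]
    rw [one_div, ofReal_mul, ofReal_neg]
  · rw [hBsymm, Matrix.mul_nonsing_inv _ (isUnit_iff_ne_zero.mpr hB)]
end
end

section
/- Let S be a symplectic 2n×2n real matrix (SᵀJS = J) and let U be a unitary operator on L²(ℝⁿ) satisfying the symplectic covariance relation U ∘ T̂(z) ∘ U⁻¹ = T̂(Sz) for all z ∈ ℝ^{2n}. Then for every φ ∈ L²(ℝⁿ), every countable set Λ ⊂ ℝ^{2n}, and every a, b > 0: the Weyl–Heisenberg system G(φ,Λ) is a frame with bounds a, b if and only if G(Uφ, SΛ) is a frame with bounds a, b, where SΛ = {Sz_λ : z_λ ∈ Λ}. In particular, G(φ,Λ) is a tight frame if and only if G(Uφ, SΛ) is a tight frame. -/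
open MeasureTheory Complex Real
open scoped BigOperators Matrix

noncomputable section

/-!
Unitarity and covariance give `⟨Uψ, T̂(Sz)Uφ⟩ = ⟨ψ, T̂(z)φ⟩` and `‖Uψ‖ = ‖ψ‖`. Since a symplectic
matrix is invertible, `z ↦ Sz` reindexes `Λ` bijectively onto `SΛ`, so the frame sums of `Uψ`
for `G(Uφ, SΛ)` equal those of `ψ` for `G(φ, Λ)`; surjectivity of `U` lets every test function
of the second system be written as `Uψ`.
-/

section SymplecticMap

variable {n : ℕ} {S : Matrix (Fin n ⊕ Fin n) (Fin n ⊕ Fin n) ℝ}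

theorem JmatR_eq_neg_J : JmatR n = -Matrix.J (Fin n) ℝ := by
  simp [JmatR, Matrix.J, Matrix.fromBlocks_neg]

theorem mem_symplecticGroup_of_transpose_mul_JmatR_mul (hS : Sᵀ * JmatR n * S = JmatR n) :
    S ∈ Matrix.symplecticGroup (Fin n) ℝ := by
  rw [SymplecticGroup.mem_iff', ← neg_inj]
  simpa [JmatR_eq_neg_J] using hS

theorem unvec_injective : Function.Injective (unvec (n := n)) :=
  (Equiv.sumArrowEquivProdArrow (Fin n) (Fin n) ℝ).injective

theorem vec_injective : Function.Injective (vec (n := n)) :=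
  (Equiv.sumArrowEquivProdArrow (Fin n) (Fin n) ℝ).symm.injective

theorem injective_unvec_mulVec_vec_of_isUnit (hS : IsUnit S) :
    Function.Injective (fun z : PS n => unvec (S *ᵥ vec z)) :=
  unvec_injective.comp ((Matrix.mulVec_injective_iff_isUnit.mpr hS).comp vec_injective)

end SymplecticMap

section L2

variable {n : ℕ}

theorem L2inner_congr_ae {ψ ψ' φ φ' : (Fin n → ℝ) → ℂ} (hψ : ψ =ᵐ[volume] ψ')
    (hφ : φ =ᵐ[volume] φ') : L2inner ψ φ = L2inner ψ' φ' :=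
  integral_congr_ae (hψ.mp (hφ.mono fun x hφx hψx => by simp only [hφx, hψx]))

theorem normSq2_congr_ae {ψ ψ' : (Fin n → ℝ) → ℂ} (h : ψ =ᵐ[volume] ψ') :
    normSq2 ψ = normSq2 ψ' :=
  integral_congr_ae (h.mono fun x hx => by simp only [hx])

theorem L2inner_self (ψ : (Fin n → ℝ) → ℂ) : L2inner ψ ψ = (normSq2 ψ : ℂ) := by
  rw [L2inner, normSq2, ← integral_complex_ofReal]
  refine integral_congr_ae (Filter.Eventually.of_forall fun x => ?_)
  simp [Complex.mul_conj, Complex.normSq_eq_norm_sq]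

theorem normSq2_eq_of_L2inner_eq {ψ ψ' : (Fin n → ℝ) → ℂ}
    (h : L2inner ψ' ψ' = L2inner ψ ψ) : normSq2 ψ' = normSq2 ψ := by
  simpa only [L2inner_self, Complex.ofReal_inj] using h

theorem heis_memLp (hb : ℝ) (z : PS n) {φ : (Fin n → ℝ) → ℂ} (hφ : MemLp φ 2 volume) :
    MemLp (heis hb z φ) 2 volume := by
  have hshift : MemLp (fun x => φ (x - z.1)) 2 volume :=
    hφ.comp_measurePreserving (measurePreserving_sub_right volume z.1)
  have hphase : Continuous fun x : Fin n → ℝ =>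
      Complex.exp ((Complex.I / (hb : ℂ)) * ((dotR z.2 x - dotR z.2 z.1 / 2 : ℝ) : ℂ)) := by
    unfold dotR
    fun_prop
  refine hshift.of_le (hphase.aestronglyMeasurable.mul hshift.aestronglyMeasurable)
    (Filter.Eventually.of_forall fun x => ?_)
  simp [heis, Complex.norm_exp, Complex.div_re]

end L2

section Covariance

variable {n : ℕ} {hb : ℝ} {U : ((Fin n → ℝ) → ℂ) → ((Fin n → ℝ) → ℂ)} {f : PS n → PS n}
  {φ : (Fin n → ℝ) → ℂ} {Λ : Set (PS n)}

theorem tsum_frameCoeff_image_eq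
    (hUinner : ∀ ψ φ, MemLp ψ 2 volume → MemLp φ 2 volume →
      L2inner (U ψ) (U φ) = L2inner ψ φ)
    (hUcov : ∀ (z : PS n) (ψ : (Fin n → ℝ) → ℂ), U (heis hb z ψ) =ᵐ[volume] heis hb (f z) (U ψ))
    (hf : Function.Injective f) (hφ : MemLp φ 2 volume)
    {ψ ψ' : (Fin n → ℝ) → ℂ} (hψ : MemLp ψ 2 volume) (hψ' : ψ' =ᵐ[volume] U ψ) :
    ∑' w : f '' Λ, ‖L2inner ψ' (heis hb (w : PS n) (U φ))‖ ^ 2 =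
      ∑' z : Λ, ‖L2inner ψ (heis hb (z : PS n) φ)‖ ^ 2 := by
  rw [tsum_image (fun w => ‖L2inner ψ' (heis hb w (U φ))‖ ^ 2) hf.injOn]
  refine tsum_congr fun z => ?_
  rw [L2inner_congr_ae hψ' (hUcov z φ).symm, hUinner ψ _ hψ (heis_memLp hb z hφ)]

theorem isWHFrame_iff_image_of_covariant
    (hUmem : ∀ ψ, MemLp ψ 2 volume → MemLp (U ψ) 2 volume)
    (hUinner : ∀ ψ φ, MemLp ψ 2 volume → MemLp φ 2 volume →
      L2inner (U ψ) (U φ) = L2inner ψ φ)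
    (hUsurj : ∀ ψ', MemLp ψ' 2 volume → ∃ ψ, MemLp ψ 2 volume ∧ U ψ =ᵐ[volume] ψ')
    (hUcov : ∀ (z : PS n) (ψ : (Fin n → ℝ) → ℂ), U (heis hb z ψ) =ᵐ[volume] heis hb (f z) (U ψ))
    (hf : Function.Injective f) (hφ : MemLp φ 2 volume) (a b : ℝ) :
    IsWHFrame hb φ Λ a b ↔ IsWHFrame hb (U φ) (f '' Λ) a b := by
  have hnorm : ∀ ψ, MemLp ψ 2 volume → normSq2 (U ψ) = normSq2 ψ := fun ψ hψ =>
    normSq2_eq_of_L2inner_eq (hUinner ψ ψ hψ hψ)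
  constructor
  · intro hframe ψ' hψ'
    obtain ⟨ψ, hψ, hUψ⟩ := hUsurj ψ' hψ'
    rw [normSq2_congr_ae hUψ.symm, hnorm ψ hψ,
      tsum_frameCoeff_image_eq hUinner hUcov hf hφ hψ hUψ.symm]
    exact hframe ψ hψ
  · intro hframe ψ hψ
    simpa only [hnorm ψ hψ, tsum_frameCoeff_image_eq hUinner hUcov hf hφ hψ
      (Filter.EventuallyEq.refl _ _)] using hframe (U ψ) (hUmem ψ hψ)

end Covariance

/-- `U` is a unitary operator on `L²(ℝⁿ)` given on representatives: it preserves membership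
in `L²` and inner products, and is surjective onto `L²` up to a.e. equality. -/
theorem stmt4_general (hb : ℝ) (n : ℕ)
    (S : Matrix (Fin n ⊕ Fin n) (Fin n ⊕ Fin n) ℝ) (hS : Sᵀ * JmatR n * S = JmatR n)
    (U : ((Fin n → ℝ) → ℂ) → ((Fin n → ℝ) → ℂ))
    (hUmem : ∀ ψ, MemLp ψ 2 volume → MemLp (U ψ) 2 volume)
    (hUinner : ∀ ψ φ, MemLp ψ 2 volume → MemLp φ 2 volume →
      L2inner (U ψ) (U φ) = L2inner ψ φ)
    (hUsurj : ∀ ψ', MemLp ψ' 2 volume →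
      ∃ ψ, MemLp ψ 2 volume ∧ U ψ =ᵐ[volume] ψ')
    (hUcov : ∀ (z : PS n) (ψ : (Fin n → ℝ) → ℂ),
      U (heis hb z ψ) =ᵐ[volume] heis hb (unvec (S.mulVec (vec z))) (U ψ)) :
    ∀ (φ : (Fin n → ℝ) → ℂ), MemLp φ 2 volume →
      ∀ (Λ : Set (PS n)), Λ.Countable →
        (∀ a b : ℝ, 0 < a → 0 < b →
          (IsWHFrame hb φ Λ a b ↔
            IsWHFrame hb (U φ) ((fun z => unvec (S.mulVec (vec z))) '' Λ) a b)) ∧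
        ((∃ a : ℝ, 0 < a ∧ IsWHFrame hb φ Λ a a) ↔
          (∃ a : ℝ, 0 < a ∧
            IsWHFrame hb (U φ) ((fun z => unvec (S.mulVec (vec z))) '' Λ) a a)) := by
  intro φ hφ Λ _
  have hSinj : Function.Injective fun z : PS n => unvec (S *ᵥ vec z) :=
    injective_unvec_mulVec_vec_of_isUnit <| (Matrix.isUnit_iff_isUnit_det S).mpr <|
      SymplecticGroup.symplectic_det (mem_symplecticGroup_of_transpose_mul_JmatR_mul hS)
  have hframe (a b : ℝ) := isWHFrame_iff_image_of_covariant (Λ := Λ) hUmem hUinner hUsurj hUcov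
    hSinj hφ a b
  exact ⟨fun a b _ _ => hframe a b, exists_congr fun a => and_congr_right fun _ => hframe a a⟩

/-- symplectic covariance of Weyl–Heisenberg frames.  `U` is a unitary
operator on `L²(ℝⁿ)` (given on representatives: it preserves membership in `L²`,
preserves inner products, and is surjective onto `L²` up to a.e. equality) which
satisfies the symplectic covariance relation `U T̂(z) U⁻¹ = T̂(Sz)`. -/
theorem stmt4 (hb : ℝ) (hhb : 0 < hb) (n : ℕ)
    (S : Matrix (Fin n ⊕ Fin n) (Fin n ⊕ Fin n) ℝ) (hS : Sᵀ * JmatR n * S = JmatR n)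
    (U : ((Fin n → ℝ) → ℂ) → ((Fin n → ℝ) → ℂ))
    (hUmem : ∀ ψ, MemLp ψ 2 volume → MemLp (U ψ) 2 volume)
    (hUadd : ∀ ψ φ, U (ψ + φ) = U ψ + U φ)
    (hUsmul : ∀ (c : ℂ) ψ, U (c • ψ) = c • U ψ)
    (hUinner : ∀ ψ φ, MemLp ψ 2 volume → MemLp φ 2 volume →
      L2inner (U ψ) (U φ) = L2inner ψ φ)
    (hUsurj : ∀ ψ', MemLp ψ' 2 volume →
      ∃ ψ, MemLp ψ 2 volume ∧ U ψ =ᵐ[volume] ψ')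
    (hUcov : ∀ (z : PS n) (ψ : (Fin n → ℝ) → ℂ),
      U (heis hb z ψ) =ᵐ[volume] heis hb (unvec (S.mulVec (vec z))) (U ψ)) :
    ∀ (φ : (Fin n → ℝ) → ℂ), MemLp φ 2 volume →
      ∀ (Λ : Set (PS n)), Λ.Countable →
        (∀ a b : ℝ, 0 < a → 0 < b →
          (IsWHFrame hb φ Λ a b ↔
            IsWHFrame hb (U φ) ((fun z => unvec (S.mulVec (vec z))) '' Λ) a b)) ∧
        ((∃ a : ℝ, 0 < a ∧ IsWHFrame hb φ Λ a a) ↔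
          (∃ a : ℝ, 0 < a ∧
            IsWHFrame hb (U φ) ((fun z => unvec (S.mulVec (vec z))) '' Λ) a a)) :=
  stmt4_general hb n S hS U hUmem hUinner hUsurj hUcov
end
end

section
/- For every r > 0, every γ ∈ ℝ, and all α, β > 0 with αβ = 1: ∑_{k,l ∈ ℤ} e^{-r(α²k² + 2αβγ·kl + β²(1 + γ²)l²)} ≤ ∑_{k,l ∈ ℤ} e^{-r(k²/α² + l²/β²)}. -/
/-!
Completing the square, `α²k² + 2αβγkl + β²(1 + γ²)l² = α²(k + (βγ/α)l)² + β²l²`, so for fixed `l`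
the inner sum over `k` is a shifted Gaussian sum `∑ₖ exp(-a(k + c)²)`. By Poisson summation this
equals `√(π/a) ∑ₙ exp(-π²n²/a) e^{2πinc}`, so by the triangle inequality it is largest at `c = 0`.
Hence the left side is at most `θ(rα²) θ(rβ²)` with `θ(a) = ∑ₙ exp(-an²)`, and since `1/α = β`
the right side is exactly this product.
-/

open Real Complex

lemma summable_exp_neg_mul_add_sq {a : ℝ} (ha : 0 < a) (c : ℝ) :
    Summable fun n : ℤ => rexp (-a * (n + c) ^ 2) := by
  -- `exp(-a(n + c)²)` is `exp(-ac²)` times the norm of a Jacobi theta term at `τ = i a/π`.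
  have hθ := ((summable_jacobiTheta₂_term_iff ((a / π * c : ℝ) * I) ((a / π : ℝ) * I)).2
    (by rw [mul_I_im, ofReal_re]; positivity)).norm.mul_left (rexp (-(a * c ^ 2)))
  refine hθ.congr fun n => ?_
  rw [norm_jacobiTheta₂_term, mul_I_im, mul_I_im, ofReal_re, ofReal_re, ← Real.exp_add]
  congr 1
  field_simp
  ring

lemma norm_cexp_mul_add_I_mul_sq (s x y : ℝ) :
    ‖cexp (s * (x + I * y) ^ 2)‖ = rexp (s * x ^ 2 - s * y ^ 2) := by
  have h : (s * (x + I * y) ^ 2 : ℂ) =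
      ((s * x ^ 2 - s * y ^ 2 : ℝ) : ℂ) + ((2 * s * x * y : ℝ) : ℂ) * I := by
    push_cast
    linear_combination s * y ^ 2 * I_sq
  rw [Complex.norm_exp, h, add_re, ofReal_re, re_ofReal_mul, I_re, mul_zero, add_zero]

lemma tsum_exp_neg_mul_add_sq_le {a : ℝ} (ha : 0 < a) (c : ℝ) :
    ∑' n : ℤ, rexp (-a * (n + c) ^ 2) ≤ ∑' n : ℤ, rexp (-a * n ^ 2) := by
  obtain ⟨t, ht, rfl⟩ : ∃ t, 0 < t ∧ a = π * t := ⟨a / π, by positivity, by field_simp⟩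
  have poisson := Complex.tsum_exp_neg_quadratic (a := t) (by simpa) (-(t * c))
  have hterm (n : ℤ) : (rexp (-(π * t) * (n + c) ^ 2) : ℂ) =
      rexp (-(π * t * c ^ 2)) * cexp (-π * t * n ^ 2 + 2 * π * (-(t * c)) * n) := by
    push_cast
    rw [← Complex.exp_add]
    ring_nf
  have hdual (n : ℤ) : ‖cexp (-π / t * (n + I * (-(t * c))) ^ 2)‖ =
      rexp (π * t * c ^ 2) * rexp (-π / t * n ^ 2) := by
    have h := norm_cexp_mul_add_I_mul_sq (-π / t) n (-(t * c))
    push_cast at h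
    rw [h, ← Real.exp_add]
    congr 1
    field_simp
    ring
  have hroot : ‖1 / (t : ℂ) ^ (1 / 2 : ℂ)‖ = 1 / t ^ (1 / 2 : ℝ) := by
    rw [← ofReal_one, ← ofReal_ofNat, ← ofReal_div, ← ofReal_cpow ht.le, ← ofReal_div,
      norm_real, norm_of_nonneg (by positivity)]
  have hsum : Summable fun n : ℤ => ‖cexp (-π / t * (n + I * (-(t * c))) ^ 2)‖ := by
    refine ((summable_exp_neg_mul_add_sq (a := π / t) (by positivity) 0).mul_left
      (rexp (π * t * c ^ 2))).congr fun n => ?_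
    rw [hdual, add_zero, neg_div, neg_mul]
  calc ∑' n : ℤ, rexp (-(π * t) * (n + c) ^ 2)
      = rexp (-(π * t * c ^ 2)) * ‖∑' n : ℤ, cexp (-π * t * n ^ 2 + 2 * π * (-(t * c)) * n)‖ := by
        have hC : ((∑' n : ℤ, rexp (-(π * t) * (n + c) ^ 2) : ℝ) : ℂ) = rexp (-(π * t * c ^ 2)) *
            ∑' n : ℤ, cexp (-π * t * n ^ 2 + 2 * π * (-(t * c)) * n) := by
          rw [ofReal_tsum, tsum_congr hterm, tsum_mul_left]
        rw [← norm_of_nonneg (tsum_nonneg fun n => (Real.exp_pos _).le), ← norm_real, hC,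
          norm_mul, norm_real, norm_of_nonneg (Real.exp_pos _).le]
    _ ≤ rexp (-(π * t * c ^ 2)) * (1 / t ^ (1 / 2 : ℝ) *
          ∑' n : ℤ, ‖cexp (-π / t * (n + I * (-(t * c))) ^ 2)‖) := by
        rw [poisson, norm_mul, hroot]
        gcongr
        exact norm_tsum_le_tsum_norm hsum
    _ = 1 / t ^ (1 / 2 : ℝ) * ∑' n : ℤ, rexp (-π / t * n ^ 2) := by
        simp_rw [hdual, tsum_mul_left]
        have hc : rexp (-(π * t * c ^ 2)) * rexp (π * t * c ^ 2) = 1 := by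
          rw [← Real.exp_add, neg_add_cancel, Real.exp_zero]
        linear_combination (1 / t ^ (1 / 2 : ℝ) * ∑' n : ℤ, rexp (-π / t * n ^ 2)) * hc
    _ = ∑' n : ℤ, rexp (-(π * t) * n ^ 2) := by
        rw [← Real.tsum_exp_neg_mul_int_sq ht, neg_mul]

lemma tsum_prod_le_of_fiberwise_le {α β : Type*} {F G : α × β → ℝ} (hF : 0 ≤ F)
    (hFs : ∀ b, Summable fun a => F (a, b)) (hG : Summable G)
    (h : ∀ b, ∑' a, F (a, b) ≤ ∑' a, G (a, b)) :
    ∑' p, F p ≤ ∑' p, G p := by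
  have hG' : Summable fun p : β × α => G p.swap := hG.prod_symm
  have hF' : Summable fun p : β × α => F p.swap :=
    (summable_prod_of_nonneg (f := fun p : β × α => F p.swap) fun p => hF _).2
      ⟨hFs, hG'.prod.of_nonneg_of_le (fun b => tsum_nonneg fun a => hF _) h⟩
  rw [← (Equiv.prodComm β α).tsum_eq F, ← (Equiv.prodComm β α).tsum_eq G]
  simp only [Equiv.prodComm_apply]
  rw [hF'.tsum_prod' hFs, hG'.tsum_prod]
  exact hF'.prod.tsum_le_tsum h hG'.prod

/-- a theta-function type inequality for sheared lattices. -/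
theorem stmt13 (r : ℝ) (hr : 0 < r) (γ : ℝ) (α β : ℝ) (hα : 0 < α) (hβ : 0 < β)
    (hαβ : α * β = 1) :
    ∑' kl : ℤ × ℤ,
        Real.exp (-r * (α ^ 2 * (kl.1 : ℝ) ^ 2 +
          2 * α * β * γ * (kl.1 : ℝ) * (kl.2 : ℝ) +
          β ^ 2 * (1 + γ ^ 2) * (kl.2 : ℝ) ^ 2)) ≤
      ∑' kl : ℤ × ℤ,
        Real.exp (-r * ((kl.1 : ℝ) ^ 2 / α ^ 2 + (kl.2 : ℝ) ^ 2 / β ^ 2)) := by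
  have hβα : β = α⁻¹ := eq_inv_of_mul_eq_one_right hαβ
  have hA : 0 < r * α ^ 2 := by positivity
  have hB : 0 < r * β ^ 2 := by positivity
  have hsheared (kl : ℤ × ℤ) : rexp (-r * (α ^ 2 * (kl.1 : ℝ) ^ 2 +
      2 * α * β * γ * (kl.1 : ℝ) * (kl.2 : ℝ) + β ^ 2 * (1 + γ ^ 2) * (kl.2 : ℝ) ^ 2)) =
      rexp (-(r * α ^ 2) * (kl.1 + β * γ / α * kl.2) ^ 2) * rexp (-(r * β ^ 2) * kl.2 ^ 2) := by
    rw [← Real.exp_add]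
    congr 1
    field_simp
    ring
  have hrect (kl : ℤ × ℤ) :
      rexp (-r * ((kl.1 : ℝ) ^ 2 / α ^ 2 + (kl.2 : ℝ) ^ 2 / β ^ 2)) =
      rexp (-(r * α ^ 2) * kl.2 ^ 2) * rexp (-(r * β ^ 2) * kl.1 ^ 2) := by
    rw [← Real.exp_add, hβα]
    congr 1
    field_simp
    ring
  calc _ = ∑' kl : ℤ × ℤ,
          rexp (-(r * α ^ 2) * (kl.1 + β * γ / α * kl.2) ^ 2) * rexp (-(r * β ^ 2) * kl.2 ^ 2) :=
        tsum_congr hsheared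
    _ ≤ ∑' kl : ℤ × ℤ, rexp (-(r * α ^ 2) * kl.1 ^ 2) * rexp (-(r * β ^ 2) * kl.2 ^ 2) := by
        apply tsum_prod_le_of_fiberwise_le
        · exact fun _ => by positivity
        · intro l
          dsimp only
          exact (summable_exp_neg_mul_add_sq hA (β * γ / α * l)).mul_right _
        · simpa using (summable_exp_neg_mul_add_sq hA 0).mul_of_nonneg
            (summable_exp_neg_mul_add_sq hB 0) (fun _ => (Real.exp_pos _).le)
            (fun _ => (Real.exp_pos _).le)
        · intro l
          dsimp only
          rw [tsum_mul_right, tsum_mul_right]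
          exact mul_le_mul_of_nonneg_right (tsum_exp_neg_mul_add_sq_le hA _) (Real.exp_pos _).le
    _ = ∑' kl : ℤ × ℤ, rexp (-(r * α ^ 2) * kl.2 ^ 2) * rexp (-(r * β ^ 2) * kl.1 ^ 2) :=
        ((Equiv.prodComm ℤ ℤ).tsum_eq _).symm
    _ = _ := tsum_congr fun kl => (hrect kl).symm
end
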